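/- arXiv:1601.06752 — 7 statements merged into one kernel-verified Lean document; each statement's English description precedes it below -/
import Mathlib

section
/- If A and B are Hermitian operators with A² ≤ 1 and B² ≤ 1, then |{A,B}|² + |[A,B]|² ≤ 4·1, where {A,B} = AB + BA and [A,B] = AB − BA. -/
open Matrix ComplexOrder

/-!
The parallelogram law gives `|{A,B}|² + |[A,B]|² = 2 (|AB|² + |BA|²)`, and conjugating `A² ≤ 1`
by `B` (resp. `B² ≤ 1` by `A`) bounds `|AB|² = B A² B ≤ B² ≤ 1` and `|BA|² ≤ 1`. Only positivity
of `star x * x` and its stability under conjugation are used, so the argument runs in any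
star-ordered ring.
-/

section StarOrderedRing

variable {R : Type*} [Ring R] [StarRing R]

theorem star_add_mul_add_add_star_sub_mul_sub (x y : R) :
    star (x + y) * (x + y) + star (x - y) * (x - y) = 2 * (star x * x + star y * y) := by
  simp only [star_add, star_sub]
  noncomm_ring

variable [PartialOrder R] [StarOrderedRing R]

theorem star_mul_mul_self_le_of_star_mul_self_le_one {a : R} (ha : star a * a ≤ 1) (b : R) :
    star (a * b) * (a * b) ≤ star b * b := by
  simpa only [star_mul, mul_assoc, mul_one] using star_left_conjugate_le_conjugate ha b

theorem star_anticommutator_mul_add_star_commutator_mul_le_four {a b : R}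
    (ha : star a * a ≤ 1) (hb : star b * b ≤ 1) :
    star (a * b + b * a) * (a * b + b * a) + star (a * b - b * a) * (a * b - b * a) ≤ 4 := by
  have hab : star (a * b) * (a * b) ≤ 1 :=
    (star_mul_mul_self_le_of_star_mul_self_le_one ha b).trans hb
  have hba : star (b * a) * (b * a) ≤ 1 :=
    (star_mul_mul_self_le_of_star_mul_self_le_one hb a).trans ha
  calc star (a * b + b * a) * (a * b + b * a) + star (a * b - b * a) * (a * b - b * a)
      = 2 * (star (a * b) * (a * b)) + 2 * (star (b * a) * (b * a)) := by
        rw [star_add_mul_add_add_star_sub_mul_sub, mul_add]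
    _ ≤ 2 * 1 + 2 * 1 := by
        simp only [two_mul]
        gcongr
    _ = 4 := by norm_num

end StarOrderedRing

open scoped MatrixOrder

/-- If `A` and `B` are Hermitian with `A² ≤ 1` and `B² ≤ 1`, then
`|{A,B}|² + |[A,B]|² ≤ 4·1`, where `|Z|² = Z†Z` and `≤` is the Loewner order. -/
theorem anticommutator_commutator_modulus_sq_le (n : ℕ)
    (A B : Matrix (Fin n) (Fin n) ℂ)
    (hA : A.IsHermitian) (hB : B.IsHermitian)
    (hA1 : ((1 : Matrix (Fin n) (Fin n) ℂ) - A * A).PosSemidef)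
    (hB1 : ((1 : Matrix (Fin n) (Fin n) ℂ) - B * B).PosSemidef) :
    ((4 : ℂ) • (1 : Matrix (Fin n) (Fin n) ℂ)
      - ((A * B + B * A)ᴴ * (A * B + B * A) + (A * B - B * A)ᴴ * (A * B - B * A))).PosSemidef := by
  have hA_le_one : star A * A ≤ 1 := by rwa [star_eq_conjTranspose, hA.eq, le_iff]
  have hB_le_one : star B * B ≤ 1 := by rwa [star_eq_conjTranspose, hB.eq, le_iff]
  have h4 : (4 : ℂ) • (1 : Matrix (Fin n) (Fin n) ℂ) = 4 := by
    rw [← Nat.cast_ofNat, Nat.cast_smul_eq_nsmul, Nat.smul_one_eq_cast, Nat.cast_ofNat]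
  rw [h4, ← le_iff]
  exact star_anticommutator_mul_add_star_commutator_mul_le_four hA_le_one hB_le_one
end

section
/- With notation as in the CHSH–anticommutator bound, W² ≤ 4·(1⊗1) − [A₀,A₁]⊗[B₀,B₁], where W is the CHSH operator built from binary observables A₀, A₁, B₀, B₁. -/
/-!
`4 - [A₀, A₁] ⊗ [B₀, B₁] - W²` is a sum of four Kronecker products of positive semidefinite
matrices. The factors `2 ± {A₀, A₁}` that occur are positive semidefinite because they equal
`(A₀ ± A₁)² + (1 - A₀²) + (1 - A₁²)`.
-/

open Matrix Kronecker ComplexOrder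

namespace Matrix

variable {R : Type*} {l m n p : Type*}

theorem sub_kronecker [Ring R] (A₁ A₂ : Matrix l m R) (B : Matrix n p R) :
    (A₁ - A₂) ⊗ₖ B = A₁ ⊗ₖ B - A₂ ⊗ₖ B := by
  ext; simp [sub_mul]

theorem kronecker_sub [Ring R] (A : Matrix l m R) (B₁ B₂ : Matrix n p R) :
    A ⊗ₖ (B₁ - B₂) = A ⊗ₖ B₁ - A ⊗ₖ B₂ := by
  ext; simp [mul_sub]

theorem IsHermitian.posSemidef_mul_self [Ring R] [PartialOrder R] [StarRing R]
    [StarOrderedRing R] [Fintype n] {H : Matrix n n R} (hH : H.IsHermitian) :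
    (H * H).PosSemidef := by
  simpa only [hH.eq] using posSemidef_conjTranspose_mul_self H

end Matrix

def chshOperator {R m n : Type*} [Ring R] (A₀ A₁ : Matrix m m R) (B₀ B₁ : Matrix n n R) :
    Matrix (m × n) (m × n) R :=
  A₀ ⊗ₖ B₀ + A₀ ⊗ₖ B₁ + A₁ ⊗ₖ B₀ - A₁ ⊗ₖ B₁

theorem four_smul_one_sub_commutator_kronecker_sub_chshOperator_mul_self
    {R m n : Type*} [CommRing R] [Fintype m] [Fintype n] [DecidableEq m] [DecidableEq n]
    (A₀ A₁ : Matrix m m R) (B₀ B₁ : Matrix n n R) :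
    (4 : R) • ((1 : Matrix m m R) ⊗ₖ (1 : Matrix n n R))
        - (A₀ * A₁ - A₁ * A₀) ⊗ₖ (B₀ * B₁ - B₁ * B₀)
        - chshOperator A₀ A₁ B₀ B₁ * chshOperator A₀ A₁ B₀ B₁ =
      (1 - A₀ * A₀) ⊗ₖ ((B₀ + B₁) * (B₀ + B₁)) + (1 - A₁ * A₁) ⊗ₖ ((B₀ - B₁) * (B₀ - B₁))
        + ((2 : R) • 1 + (A₀ * A₁ + A₁ * A₀)) ⊗ₖ (1 - B₀ * B₀)
        + ((2 : R) • 1 - (A₀ * A₁ + A₁ * A₀)) ⊗ₖ (1 - B₁ * B₁) := by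
  simp only [chshOperator, mul_kronecker_mul, add_mul, mul_add, sub_mul, mul_sub, add_kronecker,
    kronecker_add, sub_kronecker, kronecker_sub, smul_kronecker]
  module

section

variable {𝕜 n : Type*} [RCLike 𝕜] [Fintype n] [DecidableEq n] {A B : Matrix n n 𝕜}

theorem posSemidef_two_smul_one_add_anticommutator (hA : A.IsHermitian) (hB : B.IsHermitian)
    (hA1 : (1 - A * A).PosSemidef) (hB1 : (1 - B * B).PosSemidef) :
    ((2 : 𝕜) • 1 + (A * B + B * A)).PosSemidef := by
  have h : (2 : 𝕜) • 1 + (A * B + B * A) = (A + B) * (A + B) + (1 - A * A) + (1 - B * B) := by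
    simp only [add_mul, mul_add]
    module
  rw [h]
  exact ((hA.add hB).posSemidef_mul_self.add hA1).add hB1

theorem posSemidef_two_smul_one_sub_anticommutator (hA : A.IsHermitian) (hB : B.IsHermitian)
    (hA1 : (1 - A * A).PosSemidef) (hB1 : (1 - B * B).PosSemidef) :
    ((2 : 𝕜) • 1 - (A * B + B * A)).PosSemidef := by
  have h := posSemidef_two_smul_one_add_anticommutator hA hB.neg hA1 (by rwa [neg_mul_neg])
  rwa [mul_neg, neg_mul, ← neg_add, ← sub_eq_add_neg] at h

end

/-- For binary observables `A₀, A₁` on `H_A` and `B₀, B₁` on `H_B`, the CHSH operator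
`W = A₀⊗B₀ + A₀⊗B₁ + A₁⊗B₀ − A₁⊗B₁` satisfies
`W² ≤ 4·(1⊗1) − [A₀,A₁]⊗[B₀,B₁]` in the Loewner order. -/
theorem chsh_operator_sq_le (nA nB : ℕ)
    (A₀ A₁ : Matrix (Fin nA) (Fin nA) ℂ) (B₀ B₁ : Matrix (Fin nB) (Fin nB) ℂ)
    (hA₀ : A₀.IsHermitian) (hA₁ : A₁.IsHermitian)
    (hB₀ : B₀.IsHermitian) (hB₁ : B₁.IsHermitian)
    (hA₀1 : ((1 : Matrix (Fin nA) (Fin nA) ℂ) - A₀ * A₀).PosSemidef)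
    (hA₁1 : ((1 : Matrix (Fin nA) (Fin nA) ℂ) - A₁ * A₁).PosSemidef)
    (hB₀1 : ((1 : Matrix (Fin nB) (Fin nB) ℂ) - B₀ * B₀).PosSemidef)
    (hB₁1 : ((1 : Matrix (Fin nB) (Fin nB) ℂ) - B₁ * B₁).PosSemidef)
    (W : Matrix (Fin nA × Fin nB) (Fin nA × Fin nB) ℂ)
    (hW : W = A₀ ⊗ₖ B₀ + A₀ ⊗ₖ B₁ + A₁ ⊗ₖ B₀ - A₁ ⊗ₖ B₁) :
    ((4 : ℂ) • ((1 : Matrix (Fin nA) (Fin nA) ℂ) ⊗ₖ (1 : Matrix (Fin nB) (Fin nB) ℂ))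
      - (A₀ * A₁ - A₁ * A₀) ⊗ₖ (B₀ * B₁ - B₁ * B₀) - W * W).PosSemidef := by
  obtain rfl : W = chshOperator A₀ A₁ B₀ B₁ := hW
  rw [four_smul_one_sub_commutator_kronecker_sub_chshOperator_mul_self]
  exact (((hA₀1.kronecker (hB₀.add hB₁).posSemidef_mul_self).add
    (hA₁1.kronecker (hB₀.sub hB₁).posSemidef_mul_self)).add
    ((posSemidef_two_smul_one_add_anticommutator hA₀ hA₁ hA₀1 hA₁1).kronecker hB₀1)).add
    ((posSemidef_two_smul_one_sub_anticommutator hA₀ hA₁ hA₀1 hA₁1).kronecker hB₁1)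
end

section
/- Let ρ_{XYB} = Σ_{x,y} p_{xy} |x⟩⟨x| ⊗ |y⟩⟨y| ⊗ ρ_{xy} be a ccq-state on finite sets X, Y and a finite-dimensional system B. Then the guessing probability with postmeasurement information satisfies p_guess(X|B Y*) = sup over measurements {N_k} on B of p_guess(X|KY), where P(x,y,k) = p_{xy}·tr(N_k ρ_{xy}) and p_guess(X|B Y*) is the maximum over POVMs {M_f} indexed by functions f: Y → X of Σ_{x,y,f: x=f(y)} p_{xy}·tr(M_f ρ_{xy}). -/
open Finset Matrix ComplexOrder

/-!
A measurement with outcomes `f : Y → X` is used with postmeasurement information by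
guessing `f y`, and conversely a measurement `{N_k}` followed by the optimal classical
guess `x = g k y` is the coarse-grained measurement `M_f = Σ_{g k = f} N_k`. So every value
on one side is dominated by a value on the other, and the suprema agree.
-/

section CoarseGrain

variable {ι κ α : Type*} [Fintype ι] [DecidableEq κ] [AddCommMonoid α]

def coarseGrain (g : ι → κ) (N : ι → α) (j : κ) : α :=
  ∑ i with g i = j, N i

theorem sum_coarseGrain [Fintype κ] (g : ι → κ) (N : ι → α) :
    ∑ j, coarseGrain g N j = ∑ i, N i :=
  sum_fiberwise univ g N

theorem sum_apply_coarseGrain [Fintype κ] {β : Type*} [AddCommMonoid β] (g : ι → κ)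
    (N : ι → α) (φ : κ → α →+ β) : ∑ j, φ j (coarseGrain g N j) = ∑ i, φ (g i) (N i) := by
  calc ∑ j, φ j (coarseGrain g N j) = ∑ j, ∑ i with g i = j, φ (g i) (N i) := by
        refine sum_congr rfl fun j _ => ?_
        rw [coarseGrain, map_sum]
        exact sum_congr rfl fun i hi => by rw [(mem_filter.mp hi).2]
    _ = ∑ i, φ (g i) (N i) := sum_fiberwise univ g _

theorem Matrix.PosSemidef.coarseGrain {n R : Type*} [Fintype n] [Ring R] [PartialOrder R]
    [StarRing R] [AddLeftMono R] (g : ι → κ) {N : ι → Matrix n n R}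
    (hN : ∀ i, (N i).PosSemidef) (j : κ) :
    (_root_.coarseGrain g N j).PosSemidef :=
  posSemidef_sum _ fun i _ => hN i

end CoarseGrain

section Guessing

variable {𝒳 𝒴 ι α : Type*} [Fintype 𝒳] [Nonempty 𝒳] [Fintype 𝒴] [Fintype ι]

theorem sum_apply_le_sum_sup' [DecidableEq 𝒴] (w : 𝒳 → 𝒴 → α → ℝ) (M : (𝒴 → 𝒳) → α) :
    ∑ f, ∑ y, w (f y) y (M f) ≤ ∑ y, ∑ f, univ.sup' univ_nonempty fun x => w x y (M f) := by
  rw [sum_comm]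
  exact sum_le_sum fun y _ => sum_le_sum fun f _ => le_sup' (fun x => w x y (M f)) (mem_univ _)

theorem exists_sum_sup'_eq_sum_apply_coarseGrain [DecidableEq 𝒴] [DecidableEq 𝒳]
    [AddCommMonoid α] (w : 𝒳 → 𝒴 → α →+ ℝ) (N : ι → α) :
    ∃ g : ι → 𝒴 → 𝒳, ∑ y, ∑ k, (univ.sup' univ_nonempty fun x => w x y (N k)) =
      ∑ f, ∑ y, w (f y) y (coarseGrain g N f) := by
  choose g hg using fun k y => exists_mem_eq_sup' univ_nonempty fun x => w x y (N k)
  refine ⟨g, ?_⟩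
  rw [sum_comm (f := fun f y => w (f y) y (coarseGrain g N f))]
  refine sum_congr rfl fun y _ => ?_
  rw [sum_apply_coarseGrain g N fun f => w (f y) y]
  exact sum_congr rfl fun k _ => (hg k y).2

end Guessing

def weightedTraceRe {n : Type*} [Fintype n] (c : ℝ) (ρ : Matrix n n ℂ) :
    Matrix n n ℂ →+ ℝ where
  toFun M := c * ((M * ρ).trace).re
  map_zero' := by simp
  map_add' M N := by simp [add_mul, mul_add]

theorem pguess_postmeasurement_eq_general
    (𝒳 𝒴 : Type) [Fintype 𝒳] [Fintype 𝒴] [DecidableEq 𝒴] [Nonempty 𝒳]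
    (d : ℕ)
    (p : 𝒳 → 𝒴 → ℝ) (ρ : 𝒳 → 𝒴 → Matrix (Fin d) (Fin d) ℂ) :
    sSup { r : ℝ | ∃ M : (𝒴 → 𝒳) → Matrix (Fin d) (Fin d) ℂ,
        (∀ f, (M f).PosSemidef) ∧ (∑ f, M f = 1) ∧
        r = ∑ f : 𝒴 → 𝒳, ∑ y, p (f y) y * ((M f * ρ (f y) y).trace).re }
      = sSup { r : ℝ | ∃ (K : ℕ) (N : Fin K → Matrix (Fin d) (Fin d) ℂ),
        (∀ k, (N k).PosSemidef) ∧ (∑ k, N k = 1) ∧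
        r = ∑ y, ∑ k, (univ.sup' univ_nonempty fun x => p x y * ((N k * ρ x y).trace).re) } := by
  classical
  let w x y := weightedTraceRe (p x y) (ρ x y)
  refine csSup_eq_csSup_of_forall_exists_le ?_ ?_
  · rintro _ ⟨M, hM, hM1, rfl⟩
    let e := (Fintype.equivFin (𝒴 → 𝒳)).symm
    refine ⟨_, ⟨_, M ∘ e, fun k => hM (e k), (e.sum_comp M).trans hM1, rfl⟩, ?_⟩
    refine (sum_apply_le_sum_sup' (fun x y => w x y) M).trans_eq ?_
    exact sum_congr rfl fun y _ => (e.sum_comp _).symm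
  · rintro _ ⟨K, N, hN, hN1, rfl⟩
    obtain ⟨g, hg⟩ := exists_sum_sup'_eq_sum_apply_coarseGrain w N
    exact ⟨_, ⟨coarseGrain g N, PosSemidef.coarseGrain g hN, (sum_coarseGrain g N).trans hN1,
      hg⟩, le_rfl⟩

/-- Guessing with postmeasurement information: for a ccq-state
`ρ_{XYB} = Σ_{x,y} p_{xy} |x⟩⟨x|⊗|y⟩⟨y|⊗ρ_{xy}`, the optimal guessing probability
with `Y` as postmeasurement information (maximum over POVMs indexed by functions
`f : Y → X` of `Σ_{x=f(y)} p_{xy} tr(M_f ρ_{xy})`) equals the supremum over all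
measurements `{N_k}` on `B` of the classical guessing probability
`p_guess(X|KY) = Σ_{y,k} max_x p_{xy} tr(N_k ρ_{xy})`. -/
theorem pguess_postmeasurement_eq
    (𝒳 𝒴 : Type) [Fintype 𝒳] [Fintype 𝒴] [DecidableEq 𝒴] [Nonempty 𝒳] [Nonempty 𝒴]
    (d : ℕ)
    (p : 𝒳 → 𝒴 → ℝ) (ρ : 𝒳 → 𝒴 → Matrix (Fin d) (Fin d) ℂ)
    (hp0 : ∀ x y, 0 ≤ p x y) (hp1 : ∑ x, ∑ y, p x y = 1)
    (hρ : ∀ x y, (ρ x y).PosSemidef) (hρtr : ∀ x y, (ρ x y).trace = 1) :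
    sSup { r : ℝ | ∃ M : (𝒴 → 𝒳) → Matrix (Fin d) (Fin d) ℂ,
        (∀ f, (M f).PosSemidef) ∧ (∑ f, M f = 1) ∧
        r = ∑ f : 𝒴 → 𝒳, ∑ y, p (f y) y * ((M f * ρ (f y) y).trace).re }
      = sSup { r : ℝ | ∃ (K : ℕ) (N : Fin K → Matrix (Fin d) (Fin d) ℂ),
        (∀ k, (N k).PosSemidef) ∧ (∑ k, N k = 1) ∧
        r = ∑ y, ∑ k, (univ.sup' univ_nonempty fun x => p x y * ((N k * ρ x y).trace).re) } :=
  pguess_postmeasurement_eq_general 𝒳 𝒴 d p ρ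
end

section
/- There exists a joint distribution P_{X₁X₂Θ₂} on bits such that the ordinary guessing probability of (X₁,X₂) given Θ₂ equals 1/2, while the sequential guessing probability (where X₁ must be guessed before Θ₂ is revealed, i.e., max over constants c and functions g: {0,1} → {0,1} of Pr[X₁ = c ∧ X₂ = g(Θ₂)]) is at most 3/8. Hence sequential guessing is strictly suboptimal. -/
/-!
The ordinary guessing probability splits over `θ` as `∑ θ, max_{x₁, x₂} P θ x₁ x₂`, whereas
sequential guessing only achieves `max_{x₁} ∑ θ, max_{x₂} P θ x₁ x₂`. In the distribution below
the heaviest cell for `Θ₂ = θ` has `X₁ = θ`, so the best guess of `X₁` depends on `Θ₂`, and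
committing to a constant loses `1/8`.
-/

open Finset

theorem Finset.sup'_univ_prod {α β γ : Type*} [LinearOrder γ] [Fintype α] [Fintype β]
    [Nonempty α] [Nonempty β] (f : α × β → γ) :
    univ.sup' univ_nonempty f =
      univ.sup' univ_nonempty fun a => univ.sup' univ_nonempty fun b => f (a, b) :=
  eq_of_forall_ge_iff fun c => by simp [Prod.forall]

theorem Finset.sup'_univ_sum_comp {Θ α γ : Type*} [Fintype Θ] [DecidableEq Θ] [Fintype α]
    [Nonempty α] [AddCommMonoid γ] [LinearOrder γ] [IsOrderedAddMonoid γ] (F : Θ → α → γ) :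
    univ.sup' univ_nonempty (fun f : Θ → α => ∑ θ, F θ (f θ)) =
      ∑ θ, univ.sup' univ_nonempty (F θ) := by
  refine le_antisymm (sup'_le _ _ fun f _ => sum_le_sum fun θ _ => le_sup' _ (mem_univ _)) ?_
  choose g _ hg using fun θ => exists_mem_eq_sup' univ_nonempty (F θ)
  simpa only [hg] using le_sup' (fun f : Θ → α => ∑ θ, F θ (f θ)) (mem_univ g)

theorem Fin.sup'_univ_two {γ : Type*} [LinearOrder γ] (f : Fin 2 → γ) :
    univ.sup' univ_nonempty f = max (f 0) (f 1) :=
  eq_of_forall_ge_iff fun c => by simp [Fin.forall_fin_two]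

section Guessing

variable {Θ X₁ X₂ : Type*} [Fintype Θ] [DecidableEq Θ] [Fintype X₁] [Fintype X₂]
  [Nonempty X₁] [Nonempty X₂]

def guessingProb (P : Θ → X₁ → X₂ → ℝ) : ℝ :=
  univ.sup' univ_nonempty fun fg : (Θ → X₁) × (Θ → X₂) => ∑ θ, P θ (fg.1 θ) (fg.2 θ)

def sequentialGuessingProb (P : Θ → X₁ → X₂ → ℝ) : ℝ :=
  univ.sup' univ_nonempty fun cg : X₁ × (Θ → X₂) => ∑ θ, P θ cg.1 (cg.2 θ)

theorem guessingProb_eq_sum_sup' (P : Θ → X₁ → X₂ → ℝ) :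
    guessingProb P =
      ∑ θ, univ.sup' univ_nonempty fun x₁ => univ.sup' univ_nonempty (P θ x₁) := by
  simp only [guessingProb, sup'_univ_prod, sup'_univ_sum_comp]
  exact sup'_univ_sum_comp fun θ x₁ => univ.sup' univ_nonempty (P θ x₁)

theorem sequentialGuessingProb_eq_sup'_sum (P : Θ → X₁ → X₂ → ℝ) :
    sequentialGuessingProb P =
      univ.sup' univ_nonempty fun x₁ => ∑ θ, univ.sup' univ_nonempty (P θ x₁) := by
  simp only [sequentialGuessingProb, sup'_univ_prod, sup'_univ_sum_comp]

end Guessing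

noncomputable def counterexampleDist : Fin 2 → Fin 2 → Fin 2 → ℝ :=
  ![![![1/4, 0], ![1/8, 1/8]], ![![1/8, 1/8], ![0, 1/4]]]

theorem counterexampleDist_nonneg (θ x₁ x₂ : Fin 2) : 0 ≤ counterexampleDist θ x₁ x₂ := by
  fin_cases θ <;> fin_cases x₁ <;> fin_cases x₂ <;> norm_num [counterexampleDist]

theorem sum_counterexampleDist : ∑ θ, ∑ x₁, ∑ x₂, counterexampleDist θ x₁ x₂ = 1 := by
  norm_num [Fin.sum_univ_two, counterexampleDist]

theorem guessingProb_counterexampleDist : guessingProb counterexampleDist = 1 / 2 := by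
  rw [guessingProb_eq_sum_sup']
  norm_num [Fin.sup'_univ_two, Fin.sum_univ_two, counterexampleDist]

theorem sequentialGuessingProb_counterexampleDist :
    sequentialGuessingProb counterexampleDist = 3 / 8 := by
  rw [sequentialGuessingProb_eq_sup'_sum]
  norm_num [Fin.sup'_univ_two, Fin.sum_univ_two, counterexampleDist]

/-- There is a joint distribution `P(θ₂, x₁, x₂)` on bits for which the ordinary guessing
probability of `(X₁, X₂)` given `Θ₂` equals `1/2`, while the sequential guessing
probability (where `X₁` must be guessed by a constant `c` before `Θ₂` is revealed)
is at most `3/8`: sequential guessing is strictly suboptimal. -/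
theorem sequential_guessing_not_optimal :
    ∃ P : Fin 2 → Fin 2 → Fin 2 → ℝ,
      (∀ θ x₁ x₂, 0 ≤ P θ x₁ x₂) ∧ (∑ θ, ∑ x₁, ∑ x₂, P θ x₁ x₂ = 1) ∧
      (univ.sup' univ_nonempty
        (fun fg : (Fin 2 → Fin 2) × (Fin 2 → Fin 2) =>
          ∑ θ, P θ (fg.1 θ) (fg.2 θ)) = 1 / 2) ∧
      (univ.sup' univ_nonempty
        (fun cg : Fin 2 × (Fin 2 → Fin 2) =>
          ∑ θ, P θ cg.1 (cg.2 θ)) ≤ 3 / 8) :=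
  ⟨counterexampleDist, counterexampleDist_nonneg, sum_counterexampleDist,
    guessingProb_counterexampleDist, sequentialGuessingProb_counterexampleDist.le⟩
end

section
/- Define on 4-dimensional space the state ρ = ½(|0⟩⟨0| + |2⟩⟨2|) and observables A₀ = |0⟩⟨0| − |1⟩⟨1| + |2⟩⟨2| − |3⟩⟨3| and A₁ = |0⟩⟨0| − |1⟩⟨1| − |2⟩⟨2| + |3⟩⟨3|. Then the effective anticommutator ½ tr({A₀,A₁}ρ) equals 0 while the absolute effective anticommutator ½ tr(|{A₀,A₁}|ρ) equals 1. -/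
/-! The anticommutator {A₀,A₁} = diag(2,2,−2,−2) is diagonal, and by uniqueness of positive square
roots the modulus of a diagonal matrix is the diagonal of the moduli, so |{A₀,A₁}| = diag(2,2,2,2).
The state ρ weighs the entries at |0⟩ and |2⟩ equally: 2 and −2 cancel, while 2 and 2 do not. -/

open Matrix ComplexOrder

/-- The positive semidefinite square root of a positive semidefinite matrix
(the definition Mathlib had in December 2024, since removed). -/
noncomputable def Matrix.PosSemidef.sqrt {n 𝕜 : Type*} [Fintype n] [DecidableEq n] [RCLike 𝕜]
    {A : Matrix n n 𝕜} (hA : A.PosSemidef) : Matrix n n 𝕜 :=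
  hA.1.eigenvectorUnitary.1 * diagonal ((↑) ∘ (√·) ∘ hA.1.eigenvalues) *
  (star hA.1.eigenvectorUnitary : Matrix n n 𝕜)

open scoped MatrixOrder

namespace Matrix.PosSemidef

variable {n 𝕜 : Type*} [Fintype n] [DecidableEq n] [RCLike 𝕜]

theorem sqrt_eq_cfcSqrt {A : Matrix n n 𝕜} (hA : A.PosSemidef) : hA.sqrt = CFC.sqrt A := by
  rw [CFC.sqrt_eq_cfc, cfc_nnreal_eq_real _ A hA.nonneg, hA.1.cfc_eq, IsHermitian.cfc,
    Unitary.conjStarAlgAut_apply]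
  have h_sqrt : (fun x : ℝ ↦ (NNReal.sqrt x.toNNReal : ℝ)) = Real.sqrt := by
    funext x
    rw [Real.sqrt]
  rw [h_sqrt]
  rfl

theorem sqrt_eq_of_mul_self_eq {A B : Matrix n n 𝕜} (hA : A.PosSemidef) (hB : B.PosSemidef)
    (h : B * B = A) : hA.sqrt = B := by
  rw [sqrt_eq_cfcSqrt]
  exact CFC.sqrt_unique h hB.nonneg

theorem sqrt_conjTranspose_mul_self_diagonal (d : n → 𝕜) :
    (posSemidef_conjTranspose_mul_self (diagonal d)).sqrt = diagonal fun i ↦ (‖d i‖ : 𝕜) := by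
  refine sqrt_eq_of_mul_self_eq _ (.diagonal fun i ↦ ?_) ?_
  · exact RCLike.ofReal_nonneg.mpr (norm_nonneg _)
  · rw [diagonal_conjTranspose, diagonal_mul_diagonal, diagonal_mul_diagonal]
    congr 1
    funext i
    rw [← RCLike.ofReal_mul, ← sq, RCLike.ofReal_pow, Pi.star_apply, RCLike.star_def,
      RCLike.conj_mul]

end Matrix.PosSemidef

/-- For `ρ = ½(|0⟩⟨0| + |2⟩⟨2|)`, `A₀ = diag(1,−1,1,−1)`, `A₁ = diag(1,−1,−1,1)` on `ℂ⁴`,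
the effective anticommutator `½ tr({A₀,A₁}ρ)` equals `0`, while the absolute effective
anticommutator `½ tr(|{A₀,A₁}|ρ)` equals `1`, where `|Z| = √(Z†Z)`. -/
theorem effective_anticommutator_vs_absolute :
    ∀ (ρ A₀ A₁ : Matrix (Fin 4) (Fin 4) ℂ),
      ρ = Matrix.diagonal ![1/2, 0, 1/2, 0] →
      A₀ = Matrix.diagonal ![1, -1, 1, -1] →
      A₁ = Matrix.diagonal ![1, -1, -1, 1] →
      (1 / 2 : ℂ) * ((A₀ * A₁ + A₁ * A₀) * ρ).trace = 0 ∧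
      (1 / 2 : ℝ) *
        (((Matrix.posSemidef_conjTranspose_mul_self (A₀ * A₁ + A₁ * A₀)).sqrt * ρ).trace).re
        = 1 := by
  intro ρ A₀ A₁ hρ hA₀ hA₁
  have hanti : A₀ * A₁ + A₁ * A₀ = diagonal ![2, 2, -2, -2] := by
    rw [hA₀, hA₁, diagonal_mul_diagonal, diagonal_mul_diagonal, diagonal_add]
    congr 1
    funext i
    fin_cases i <;> norm_num
  rw [hanti, PosSemidef.sqrt_conjTranspose_mul_self_diagonal, hρ]
  constructor <;> simp [diagonal_mul_diagonal, trace_diagonal, Fin.sum_univ_four]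
  norm_num
end

section
/- Fix q ∈ (0,1], γ ∈ [3/4,1], and for k ≥ 0 define α(q,γ,k) = max over admissible pairs (p_L,p_T) of [(1−q)p_L + q e^{k(1−γ)} p_T + q e^{−kγ}(1−p_T)], where the admissible pairs are parametrized by t ∈ [0,1] via p_L(t) = ½ + (1/(2√2))√(1+t) and p_T(t) = ½ + (1/(4√2))(√(1+t)+√(1−t)). If random variables X_l (defined below) satisfy the recursion Pr[X_{l+1} ≥ x ∧ H_{l+1}] = Pr[X_l ≥ x ∧ H_l](1−q)p_L + Pr[X_l ≥ x−(1−γ) ∧ H_l] q p_T + Pr[X_l ≥ x+γ ∧ H_l] q(1−p_T) with admissible (p_L,p_T) at each step and Pr[X₀ ≥ x ∧ H₀] ≤ e^{−kx} for all real x, then for all l ∈ ℕ and all real x, Pr[X_l ≥ x ∧ H_l] ≤ α(q,γ,k)^l · e^{−kx}. -/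
/-! The recursion is linear with nonnegative coefficients and only shifts the argument, so a
bound `C e^{-kx}` at step `l` becomes `C β_l e^{-kx}` at step `l + 1`, where `β_l` is the
bracket defining `α` evaluated at the admissible pair of step `l`. Since the bracket is
continuous in `t ∈ [0,1]`, its supremum `α` is finite and dominates every `β_l`. -/

open Real Set

theorem shift_combination_le_mul_exp {Q : ℝ → ℝ} {u v k C a b c : ℝ} (x : ℝ)
    (hQ : ∀ y, Q y ≤ C * exp (-k * y)) (ha : 0 ≤ a) (hb : 0 ≤ b) (hc : 0 ≤ c) :
    Q x * a + Q (x - u) * b + Q (x + v) * c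
      ≤ C * (a + b * exp (k * u) + c * exp (-k * v)) * exp (-k * x) := by
  calc Q x * a + Q (x - u) * b + Q (x + v) * c
      ≤ C * exp (-k * x) * a + C * exp (-k * (x - u)) * b + C * exp (-k * (x + v)) * c := by
        gcongr <;> apply hQ
    _ = C * (a + b * exp (k * u) + c * exp (-k * v)) * exp (-k * x) := by
        rw [show -k * (x - u) = k * u + -k * x by ring, show -k * (x + v) = -k * v + -k * x by ring,
          exp_add, exp_add]
        ring

theorem le_pow_mul_exp_of_shift_recursion {P : ℕ → ℝ → ℝ} {a b c : ℕ → ℝ} {u v k α : ℝ}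
    (ha : ∀ l, 0 ≤ a l) (hb : ∀ l, 0 ≤ b l) (hc : ∀ l, 0 ≤ c l)
    (hrec : ∀ l x, P (l + 1) x = P l x * a l + P l (x - u) * b l + P l (x + v) * c l)
    (hα : ∀ l, a l + b l * exp (k * u) + c l * exp (-k * v) ≤ α)
    (hbase : ∀ x, P 0 x ≤ exp (-k * x)) (l : ℕ) (x : ℝ) :
    P l x ≤ α ^ l * exp (-k * x) := by
  have hα0 : 0 ≤ α := by
    have := ha 0; have := hb 0; have := hc 0
    exact le_trans (by positivity) (hα 0)
  induction l generalizing x with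
  | zero => simpa using hbase x
  | succ l ih =>
    rw [hrec]
    calc _ ≤ α ^ l * (a l + b l * exp (k * u) + c l * exp (-k * v)) * exp (-k * x) :=
          shift_combination_le_mul_exp x ih (ha l) (hb l) (hc l)
      _ ≤ α ^ l * α * exp (-k * x) := by gcongr; exact hα l
      _ = α ^ (l + 1) * exp (-k * x) := by ring

noncomputable def admissiblePL (t : ℝ) : ℝ := 1 / 2 + (1 / (2 * √2)) * √(1 + t)

noncomputable def admissiblePT (t : ℝ) : ℝ := 1 / 2 + (1 / (4 * √2)) * (√(1 + t) + √(1 - t))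

theorem admissiblePL_nonneg (t : ℝ) : 0 ≤ admissiblePL t := by
  unfold admissiblePL; positivity

theorem admissiblePT_nonneg (t : ℝ) : 0 ≤ admissiblePT t := by
  unfold admissiblePT; positivity

theorem admissiblePT_le_one {t : ℝ} (ht0 : -1 ≤ t) (ht1 : t ≤ 1) : admissiblePT t ≤ 1 := by
  have h₁ : √(1 + t) ≤ √2 := sqrt_le_sqrt (by linarith)
  have h₂ : √(1 - t) ≤ √2 := sqrt_le_sqrt (by linarith)
  have hs : 0 < √2 := by positivity
  unfold admissiblePT
  calc 1 / 2 + 1 / (4 * √2) * (√(1 + t) + √(1 - t)) ≤ 1 / 2 + 1 / (4 * √2) * (2 * √2) := by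
        gcongr; linarith
    _ = 1 := by field_simp; ring

noncomputable def alphaBracket (q γ k t : ℝ) : ℝ :=
  (1 - q) * admissiblePL t + q * exp (k * (1 - γ)) * admissiblePT t
    + q * exp (-k * γ) * (1 - admissiblePT t)

theorem continuous_alphaBracket (q γ k : ℝ) : Continuous (alphaBracket q γ k) := by
  unfold alphaBracket admissiblePL admissiblePT; fun_prop

theorem alphaBracket_le_sSup (q γ k : ℝ) {t : ℝ} (ht : t ∈ Icc (0 : ℝ) 1) :
    alphaBracket q γ k t ≤ sSup (alphaBracket q γ k '' Icc 0 1) :=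
  le_csSup (isCompact_Icc.image (continuous_alphaBracket q γ k)).bddAbove (mem_image_of_mem _ ht)

theorem sequential_recursion_bound_general
    (q γ k : ℝ) (hq0 : 0 < q) (hq1 : q ≤ 1)
    (Pr : ℕ → ℝ → ℝ)
    (pL pT : ℕ → ℝ)
    (hadm : ∀ l, ∃ t ∈ Set.Icc (0 : ℝ) 1,
      pL l = 1 / 2 + (1 / (2 * Real.sqrt 2)) * Real.sqrt (1 + t) ∧
      pT l = 1 / 2 + (1 / (4 * Real.sqrt 2)) * (Real.sqrt (1 + t) + Real.sqrt (1 - t)))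
    (hrec : ∀ l x, Pr (l + 1) x =
      Pr l x * ((1 - q) * pL l) + Pr l (x - (1 - γ)) * (q * pT l)
        + Pr l (x + γ) * (q * (1 - pT l)))
    (hbase : ∀ x : ℝ, Pr 0 x ≤ Real.exp (-k * x))
    (α : ℝ)
    (hα : α = sSup { r : ℝ | ∃ t ∈ Set.Icc (0 : ℝ) 1,
      r = (1 - q) * (1 / 2 + (1 / (2 * Real.sqrt 2)) * Real.sqrt (1 + t))
        + q * Real.exp (k * (1 - γ)) *
            (1 / 2 + (1 / (4 * Real.sqrt 2)) * (Real.sqrt (1 + t) + Real.sqrt (1 - t)))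
        + q * Real.exp (-k * γ) *
            (1 - (1 / 2 + (1 / (4 * Real.sqrt 2)) * (Real.sqrt (1 + t) + Real.sqrt (1 - t)))) }) :
    ∀ (l : ℕ) (x : ℝ), Pr l x ≤ α ^ l * Real.exp (-k * x) := by
  choose t ht hpL hpT using hadm
  have hpL' : ∀ l, pL l = admissiblePL (t l) := hpL
  have hpT' : ∀ l, pT l = admissiblePT (t l) := hpT
  have hα' : α = sSup (alphaBracket q γ k '' Icc 0 1) := by
    rw [hα]; congr 1; ext r
    constructor <;> rintro ⟨s, hs, h⟩ <;> exact ⟨s, hs, h.symm⟩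
  have hpT1 : ∀ l, pT l ≤ 1 := fun l => hpT' l ▸ admissiblePT_le_one (by linarith [(ht l).1]) (ht l).2
  refine le_pow_mul_exp_of_shift_recursion (fun l => ?_) (fun l => ?_) (fun l => ?_) hrec
    (fun l => ?_) hbase
  · exact mul_nonneg (by linarith) (hpL' l ▸ admissiblePL_nonneg _)
  · exact mul_nonneg hq0.le (hpT' l ▸ admissiblePT_nonneg _)
  · exact mul_nonneg hq0.le (by linarith [hpT1 l])
  · calc _ = alphaBracket q γ k (t l) := by rw [alphaBracket, ← hpL', ← hpT']; ring
      _ ≤ α := hα' ▸ alphaBracket_le_sSup q γ k (ht l)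

/-- Martingale-style recursion bound for the sequential attack. With
`p_L(t) = ½ + (1/(2√2))√(1+t)`, `p_T(t) = ½ + (1/(4√2))(√(1+t)+√(1−t))` for `t ∈ [0,1]`,
and `α(q,γ,k)` the supremum over admissible pairs of
`(1−q)p_L + q e^{k(1−γ)} p_T + q e^{−kγ}(1−p_T)`: if `Pr l x` (the probability of
`X_l ≥ x ∧ H_l`) is nonnegative, satisfies the one-step recursion with an admissible
pair at each step, and `Pr 0 x ≤ e^{−kx}`, then `Pr l x ≤ α^l e^{−kx}` for all `l, x`. -/
theorem sequential_recursion_bound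
    (q γ k : ℝ) (hq0 : 0 < q) (hq1 : q ≤ 1) (hγ0 : 3 / 4 ≤ γ) (hγ1 : γ ≤ 1) (hk : 0 ≤ k)
    (Pr : ℕ → ℝ → ℝ) (hPr0 : ∀ l x, 0 ≤ Pr l x)
    (pL pT : ℕ → ℝ)
    (hadm : ∀ l, ∃ t ∈ Set.Icc (0 : ℝ) 1,
      pL l = 1 / 2 + (1 / (2 * Real.sqrt 2)) * Real.sqrt (1 + t) ∧
      pT l = 1 / 2 + (1 / (4 * Real.sqrt 2)) * (Real.sqrt (1 + t) + Real.sqrt (1 - t)))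
    (hrec : ∀ l x, Pr (l + 1) x =
      Pr l x * ((1 - q) * pL l) + Pr l (x - (1 - γ)) * (q * pT l)
        + Pr l (x + γ) * (q * (1 - pT l)))
    (hbase : ∀ x : ℝ, Pr 0 x ≤ Real.exp (-k * x))
    (α : ℝ)
    (hα : α = sSup { r : ℝ | ∃ t ∈ Set.Icc (0 : ℝ) 1,
      r = (1 - q) * (1 / 2 + (1 / (2 * Real.sqrt 2)) * Real.sqrt (1 + t))
        + q * Real.exp (k * (1 - γ)) *
            (1 / 2 + (1 / (4 * Real.sqrt 2)) * (Real.sqrt (1 + t) + Real.sqrt (1 - t)))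
        + q * Real.exp (-k * γ) *
            (1 - (1 / 2 + (1 / (4 * Real.sqrt 2)) * (Real.sqrt (1 + t) + Real.sqrt (1 - t)))) }) :
    ∀ (l : ℕ) (x : ℝ), Pr l x ≤ α ^ l * Real.exp (-k * x) :=
  sequential_recursion_bound_general q γ k hq0 hq1 Pr pL pT hadm hrec hbase α hα
end

section
/- Define A(k) = (1/(4√2))[2(1−q) + q e^{−kγ}(e^k − 1)], B(k) = q e^{−kγ}(e^k − 1)/(4√2), C(k) = (1−q)/2 + q e^{−kγ}(e^k + 1)/2, and g(k) = √(2(A(k)² + B(k)²)) + C(k), for fixed q ∈ (0,1) and γ ∈ (3/4,1]. Then g(0) = 1 and g'(0) = (3/4 − γ)q < 0; consequently there exists k > 0 with g(k) < 1. -/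
/-!
At `k = 0` the term `B` vanishes and `A` is positive, so `√(2(A² + B²)) = √2 · |A|` to first
order and the square-root term has derivative `√2 · A'(0) = q/4`. Adding `C'(0) = q(1 - 2γ)/2`
gives `g'(0) = (3/4 - γ) q`, which is negative, so `g` drops below `g(0) = 1` just right of `0`.
-/

open Real

theorem HasDerivAt.exists_gt_lt_of_neg {f : ℝ → ℝ} {f' x : ℝ} (hf : HasDerivAt f f' x)
    (hf' : f' < 0) : ∃ y > x, f y < f x := by
  obtain ⟨y, hslope, hxy⟩ :=
    ((hf.hasDerivWithinAt.liminf_right_slope_le hf').and_eventually self_mem_nhdsWithin).exists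
  refine ⟨y, hxy, ?_⟩
  rw [slope_def_field, div_lt_iff₀ (sub_pos.2 hxy), zero_mul] at hslope
  linarith

theorem hasDerivAt_mul_exp_neg_mul_mul_exp_add (q γ c : ℝ) :
    HasDerivAt (fun k => q * exp (-k * γ) * (exp k + c)) (q * (1 - γ * (1 + c))) 0 := by
  have hdecay : HasDerivAt (fun k : ℝ => -k * γ) (-γ) 0 := by
    simpa using (hasDerivAt_id (0 : ℝ)).neg.mul_const γ
  refine ((hdecay.exp.const_mul q).fun_mul ((hasDerivAt_exp 0).add_const c)).congr_deriv ?_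
  simp only [neg_zero, zero_mul, exp_zero]
  ring

theorem sqrt_two_mul_sq_add_zero_sq {a : ℝ} (ha : 0 ≤ a) :
    √(2 * (a ^ 2 + 0 ^ 2)) = √2 * a := by
  rw [zero_pow two_ne_zero, add_zero, sqrt_mul zero_le_two, sqrt_sq ha]

theorem HasDerivAt.sqrt_two_mul_sq_add_sq {A B : ℝ → ℝ} {a b x : ℝ} (hA : HasDerivAt A a x)
    (hB : HasDerivAt B b x) (hAx : 0 < A x) (hBx : B x = 0) :
    HasDerivAt (fun k => √(2 * (A k ^ 2 + B k ^ 2))) (√2 * a) x := by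
  have hsum := ((hA.fun_pow 2).fun_add (hB.fun_pow 2)).const_mul 2
  have hsum_ne : 2 * (A x ^ 2 + B x ^ 2) ≠ 0 := by positivity
  refine (hsum.sqrt hsum_ne).congr_deriv ?_
  rw [hBx, sqrt_two_mul_sq_add_zero_sq hAx.le]
  field_simp
  linear_combination (-(a * A x)) * sq_sqrt zero_le_two

theorem decay_rate_below_one_general
    (q γ : ℝ) (hq0 : 0 < q) (hq1 : q < 1) (hγ0 : 3 / 4 < γ)
    (A B C g : ℝ → ℝ)
    (hA : ∀ k, A k = (1 / (4 * Real.sqrt 2)) *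
      (2 * (1 - q) + q * Real.exp (-k * γ) * (Real.exp k - 1)))
    (hB : ∀ k, B k = q * Real.exp (-k * γ) * (Real.exp k - 1) / (4 * Real.sqrt 2))
    (hC : ∀ k, C k = (1 - q) / 2 + q * Real.exp (-k * γ) * (Real.exp k + 1) / 2)
    (hg : ∀ k, g k = Real.sqrt (2 * ((A k) ^ 2 + (B k) ^ 2)) + C k) :
    g 0 = 1 ∧ HasDerivAt g ((3 / 4 - γ) * q) 0 ∧ (3 / 4 - γ) * q < 0 ∧
      ∃ k > 0, g k < 1 := by
  have hA0 : A 0 = (1 - q) / (2 * √2) := by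
    rw [hA]
    simp only [neg_zero, zero_mul, exp_zero, sub_self, mul_zero, add_zero]
    field_simp
    ring
  have hB0 : B 0 = 0 := by simp [hB]
  have hC0 : C 0 = (1 + q) / 2 := by
    rw [hC]
    simp only [neg_zero, zero_mul, exp_zero]
    ring
  have hA0_pos : 0 < A 0 := by rw [hA0]; have := sub_pos.2 hq1; positivity
  have hu := hasDerivAt_mul_exp_neg_mul_mul_exp_add q γ (-1)
  simp only [← sub_eq_add_neg, sub_self, mul_zero, sub_zero, mul_one] at hu
  have hA' : HasDerivAt A (1 / (4 * √2) * q) 0 := by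
    rw [funext hA]; exact (hu.const_add _).const_mul _
  have hB' : HasDerivAt B (q / (4 * √2)) 0 := by
    rw [funext hB]; exact hu.div_const _
  have hC' : HasDerivAt C (q * (1 - γ * (1 + 1)) / 2) 0 := by
    rw [funext hC]; exact ((hasDerivAt_mul_exp_neg_mul_mul_exp_add q γ 1).div_const 2).const_add _
  have hg0 : g 0 = 1 := by
    rw [hg, hB0, sqrt_two_mul_sq_add_zero_sq hA0_pos.le, hA0, hC0]
    field_simp
    ring
  have hg' : HasDerivAt g ((3 / 4 - γ) * q) 0 := by
    rw [funext hg]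
    refine ((hA'.sqrt_two_mul_sq_add_sq hB' hA0_pos hB0).add hC').congr_deriv ?_
    field_simp
    ring
  have hneg : (3 / 4 - γ) * q < 0 := mul_neg_of_neg_of_pos (by linarith) hq0
  obtain ⟨k, hk, hgk⟩ := hg'.exists_gt_lt_of_neg hneg
  exact ⟨hg0, hg', hneg, k, hk, hg0 ▸ hgk⟩

/-- For `0 < q < 1` and `3/4 < γ ≤ 1`, the function
`g(k) = √(2(A(k)² + B(k)²)) + C(k)` with
`A(k) = (1/(4√2))[2(1−q) + q e^{−kγ}(e^k − 1)]`, `B(k) = q e^{−kγ}(e^k − 1)/(4√2)`,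
`C(k) = (1−q)/2 + q e^{−kγ}(e^k + 1)/2` satisfies `g(0) = 1` and `g′(0) = (3/4 − γ)q < 0`;
consequently there exists `k > 0` with `g(k) < 1`. -/
theorem decay_rate_below_one
    (q γ : ℝ) (hq0 : 0 < q) (hq1 : q < 1) (hγ0 : 3 / 4 < γ) (hγ1 : γ ≤ 1)
    (A B C g : ℝ → ℝ)
    (hA : ∀ k, A k = (1 / (4 * Real.sqrt 2)) *
      (2 * (1 - q) + q * Real.exp (-k * γ) * (Real.exp k - 1)))
    (hB : ∀ k, B k = q * Real.exp (-k * γ) * (Real.exp k - 1) / (4 * Real.sqrt 2))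
    (hC : ∀ k, C k = (1 - q) / 2 + q * Real.exp (-k * γ) * (Real.exp k + 1) / 2)
    (hg : ∀ k, g k = Real.sqrt (2 * ((A k) ^ 2 + (B k) ^ 2)) + C k) :
    g 0 = 1 ∧ HasDerivAt g ((3 / 4 - γ) * q) 0 ∧ (3 / 4 - γ) * q < 0 ∧
      ∃ k > 0, g k < 1 :=
  decay_rate_below_one_general q γ hq0 hq1 hγ0 A B C g hA hB hC hg
end
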